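/- arXiv:2410.23387 — 2 statements merged into one kernel-verified Lean document; each statement's English description precedes it below -/
import Mathlib

section
/- Let a, d, V_max, P_max be positive reals, B > 0, and A, C real with A + C·a ≥ 0 and κ > A + C·a. Let g(τ) = (A + C·a + B·a²·τ²)·a·τ, let τ_R > 0 be the unique positive real with g(τ_R) = P_max, set τ₁* = min{√(d/a), V_max/a, √((κ − A − C·a)/(B·a²)), τ_R} and τ₂* = d/(a·τ₁*). Then the pair (τ₁*, τ₂*) satisfies all the constraints τ₁ > 0, a·τ₁ ≤ V_max, a·τ₁·τ₂ = d, τ₂ ≥ τ₁, g(τ₁) ≤ P_max and A + C·a + B·a²·τ₁² ≤ κ, and for every pair (τ₁, τ₂) satisfying these constraints one has τ₁* + τ₂* ≤ τ₁ + τ₂. In other words, (τ₁*, τ₂*) is an optimal solution of the segment-duration minimization problem. -/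
/-!
Once the distance constraint is used to eliminate `τ₂ = d / (a τ₁)`, each remaining constraint
says that `τ₁` is at most one of the four bounds (the power constraint because `g` is strictly
increasing on `[0, ∞)` and `g τ_R = P_max`), so the feasible values of `τ₁` form the interval
`(0, τ₁*]`. The duration `τ₁ + (d / a) / τ₁` is decreasing on `(0, √(d / a)]`, which contains
this interval, so it is minimised at `τ₁*`.
-/
open Set

theorem add_div_le_add_div_of_le {c s t : ℝ} (hs : 0 < s) (hst : s ≤ t) (htc : t ≤ c / t) :
    t + c / t ≤ s + c / s := by
  have ht : 0 < t := hs.trans_le hst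
  have hc : s * t ≤ c := by
    have := (le_div_iff₀ ht).1 htc
    nlinarith
  have hdiff : s + c / s - (t + c / t) = (t - s) * (c - s * t) / (s * t) := by
    field_simp
    ring
  have : 0 ≤ (t - s) * (c - s * t) / (s * t) :=
    div_nonneg (mul_nonneg (by linarith) (by linarith)) (by positivity)
  linarith

theorem le_div_mul_self_iff_le_sqrt {a d τ : ℝ} (ha : 0 < a) (hτ : 0 < τ) :
    τ ≤ d / (a * τ) ↔ τ ≤ √(d / a) := by
  rw [Real.le_sqrt' hτ, le_div_iff₀ (by positivity), le_div_iff₀ ha]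
  ring_nf

theorem add_mul_sq_le_iff_le_sqrt {p q κ τ : ℝ} (hq : 0 < q) (hτ : 0 < τ) :
    p + q * τ ^ 2 ≤ κ ↔ τ ≤ √((κ - p) / q) := by
  rw [Real.le_sqrt' hτ, le_div_iff₀ hq]
  constructor <;> intro h <;> linarith

theorem strictMonoOn_add_mul_sq_mul {p q r : ℝ} (hp : 0 ≤ p) (hq : 0 < q) (hr : 0 < r) :
    StrictMonoOn (fun τ => (p + q * τ ^ 2) * (r * τ)) (Ici 0) := by
  intro x hx y _ hxy
  have hy' : 0 < y := lt_of_le_of_lt hx hxy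
  have hx' : 0 ≤ x := hx
  refine mul_lt_mul' ?_ (by gcongr) (by positivity) (by positivity)
  gcongr

theorem stmt_7_general (a d Vmax Pmax B A C κ τR : ℝ) (ha : 0 < a) (hd : 0 < d)
    (hV : 0 < Vmax) (hB : 0 < B) (hAC : 0 ≤ A + C * a)
    (hκ : A + C * a < κ) (hτR : 0 < τR)
    (hroot : (A + C * a + B * a ^ 2 * τR ^ 2) * (a * τR) = Pmax) :
    let τ₁s := min (min (Real.sqrt (d / a)) (Vmax / a))
      (min (Real.sqrt ((κ - A - C * a) / (B * a ^ 2))) τR)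
    let τ₂s := d / (a * τ₁s)
    (0 < τ₁s ∧ a * τ₁s ≤ Vmax ∧ a * τ₁s * τ₂s = d ∧ τ₁s ≤ τ₂s ∧
      (A + C * a + B * a ^ 2 * τ₁s ^ 2) * (a * τ₁s) ≤ Pmax ∧
      A + C * a + B * a ^ 2 * τ₁s ^ 2 ≤ κ) ∧
    ∀ τ₁ τ₂ : ℝ, 0 < τ₁ → a * τ₁ ≤ Vmax → a * τ₁ * τ₂ = d → τ₁ ≤ τ₂ →
      (A + C * a + B * a ^ 2 * τ₁ ^ 2) * (a * τ₁) ≤ Pmax →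
      A + C * a + B * a ^ 2 * τ₁ ^ 2 ≤ κ →
      τ₁s + τ₂s ≤ τ₁ + τ₂ := by
  intro τ₁s τ₂s
  have hτ₁s : 0 < τ₁s := by
    have hκ' : 0 < (κ - A - C * a) / (B * a ^ 2) := div_pos (by linarith) (by positivity)
    exact lt_min (lt_min (Real.sqrt_pos.2 (div_pos hd ha)) (div_pos hV ha))
      (lt_min (Real.sqrt_pos.2 hκ') hτR)
  have feasible_iff : ∀ τ, 0 < τ → (τ ≤ τ₁s ↔ a * τ ≤ Vmax ∧ τ ≤ d / (a * τ) ∧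
      (A + C * a + B * a ^ 2 * τ ^ 2) * (a * τ) ≤ Pmax ∧ A + C * a + B * a ^ 2 * τ ^ 2 ≤ κ) := by
    intro τ hτ
    rw [le_min_iff, le_min_iff, le_min_iff, le_div_iff₀' ha, ← le_div_mul_self_iff_le_sqrt ha hτ,
      sub_sub, ← add_mul_sq_le_iff_le_sqrt (by positivity) hτ, ← hroot,
      (strictMonoOn_add_mul_sq_mul hAC (by positivity) ha).le_iff_le hτ.le hτR.le]
    tauto
  obtain ⟨hVs, hords, hPs, hκs⟩ := (feasible_iff τ₁s hτ₁s).1 le_rfl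
  refine ⟨⟨hτ₁s, hVs, mul_div_cancel₀ d (mul_pos ha hτ₁s).ne', hords, hPs, hκs⟩, ?_⟩
  intro τ₁ τ₂ hτ₁ hV₁ hd₁ hord₁ hP₁ hκ₁
  obtain rfl : τ₂ = d / (a * τ₁) := eq_div_of_mul_eq (by positivity) (by linarith)
  have hτ₁le : τ₁ ≤ τ₁s := (feasible_iff τ₁ hτ₁).2 ⟨hV₁, hord₁, hP₁, hκ₁⟩
  simp only [τ₂s, div_mul_eq_div_div] at hords ⊢
  exact add_div_le_add_div_of_le hτ₁ hτ₁le hords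

/-- Optimality of `(τ₁*, τ₂*)` for the segment-duration minimization problem:
`τ₁* = min{√(d/a), V_max/a, √((κ − A − C·a)/(B·a²)), τ_R}`, `τ₂* = d/(a·τ₁*)` satisfy
all the constraints, and any feasible pair `(τ₁, τ₂)` has total duration at least
`τ₁* + τ₂*`. -/
theorem stmt_7 (a d Vmax Pmax B A C κ τR : ℝ) (ha : 0 < a) (hd : 0 < d)
    (hV : 0 < Vmax) (hP : 0 < Pmax) (hB : 0 < B) (hAC : 0 ≤ A + C * a)
    (hκ : A + C * a < κ) (hτR : 0 < τR)
    (hroot : (A + C * a + B * a ^ 2 * τR ^ 2) * (a * τR) = Pmax) :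
    let τ₁s := min (min (Real.sqrt (d / a)) (Vmax / a))
      (min (Real.sqrt ((κ - A - C * a) / (B * a ^ 2))) τR)
    let τ₂s := d / (a * τ₁s)
    (0 < τ₁s ∧ a * τ₁s ≤ Vmax ∧ a * τ₁s * τ₂s = d ∧ τ₁s ≤ τ₂s ∧
      (A + C * a + B * a ^ 2 * τ₁s ^ 2) * (a * τ₁s) ≤ Pmax ∧
      A + C * a + B * a ^ 2 * τ₁s ^ 2 ≤ κ) ∧
    ∀ τ₁ τ₂ : ℝ, 0 < τ₁ → a * τ₁ ≤ Vmax → a * τ₁ * τ₂ = d → τ₁ ≤ τ₂ →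
      (A + C * a + B * a ^ 2 * τ₁ ^ 2) * (a * τ₁) ≤ Pmax →
      A + C * a + B * a ^ 2 * τ₁ ^ 2 ≤ κ →
      τ₁s + τ₂s ≤ τ₁ + τ₂ :=
  stmt_7_general a d Vmax Pmax B A C κ τR ha hd hV hB hAC hκ hτR hroot
end

section
/- Let a > 0, B > 0 and K < 0 be real numbers, set τ̄ = √(−K/(B·a²)), let T > τ̄, let η_t, η_m, η_rb > 0, define h(τ) = (K + B·a²·τ²)·a·τ, and define the battery power P_bat(τ) = h(τ)/(η_t·η_m) if h(τ) ≥ 0 and P_bat(τ) = η_t·η_m·η_rb·h(τ) if h(τ) < 0. Then ∫₀ᵀ P_bat(τ) dτ = η_t·η_m·η_rb · ( (1/2)·K·a·τ̄² + (1/4)·B·a³·τ̄⁴ ) + (1/(η_t·η_m)) · ( (1/2)·K·a·(T² − τ̄²) + (1/4)·B·a³·(T⁴ − τ̄⁴) ). -/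
/-!
The wheel power `h τ = (K + B a² τ²) a τ` is a cubic with roots `0` and `±τ̄`, so it is
nonpositive on `[0, τ̄]` and nonnegative on `[τ̄, T]`. On each piece the battery power is a
constant multiple of `h`, and `∫₀ˣ h = ½ K a x² + ¼ B a³ x⁴`.
-/

open intervalIntegral Set

theorem intervalIntegral_ite_nonneg_of_sign_change {f : ℝ → ℝ} {a b c p q : ℝ}
    (hac : IntervalIntegrable f MeasureTheory.volume a c)
    (hcb : IntervalIntegrable f MeasureTheory.volume c b)
    (hneg : ∀ x ∈ uIcc a c, f x ≤ 0) (hpos : ∀ x ∈ uIcc c b, 0 ≤ f x) :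
    ∫ x in a..b, (if 0 ≤ f x then f x / p else q * f x) =
      q * (∫ x in a..c, f x) + (∫ x in c..b, f x) / p := by
  have on_neg : EqOn (fun x => if 0 ≤ f x then f x / p else q * f x) (fun x => q * f x)
      (uIcc a c) := by
    intro x hx
    by_cases h0 : 0 ≤ f x
    · have hx0 : f x = 0 := le_antisymm (hneg x hx) h0
      simp [hx0]
    · simp [h0]
  have on_pos : EqOn (fun x => if 0 ≤ f x then f x / p else q * f x) (fun x => f x / p)
      (uIcc c b) := fun x hx => if_pos (hpos x hx)
  rw [← integral_add_adjacent_intervals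
      ((hac.const_mul q).congr (on_neg.symm.mono uIoc_subset_uIcc))
      ((hcb.div_const p).congr (on_pos.symm.mono uIoc_subset_uIcc)),
    integral_congr on_neg, integral_congr on_pos, integral_const_mul, integral_div]

theorem integral_wheelPower (K B a x : ℝ) :
    ∫ τ in (0:ℝ)..x, (K + B * a ^ 2 * τ ^ 2) * (a * τ) =
      (1 / 2) * K * a * x ^ 2 + (1 / 4) * B * a ^ 3 * x ^ 4 := by
  have expand : (fun τ : ℝ => (K + B * a ^ 2 * τ ^ 2) * (a * τ)) =
      fun τ => K * a * τ + B * a ^ 3 * τ ^ 3 := by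
    funext τ; ring
  rw [expand, integral_add ((by fun_prop : Continuous fun τ : ℝ => K * a * τ).intervalIntegrable _ _)
      ((by fun_prop : Continuous fun τ : ℝ => B * a ^ 3 * τ ^ 3).intervalIntegrable _ _),
    integral_const_mul, integral_const_mul, integral_id, integral_pow]
  push_cast
  ring

section SignChange

variable {a B K : ℝ} (ha : 0 < a) (hB : 0 < B) (hK : K < 0)

include ha hB hK in
theorem wheelPower_root : K + B * a ^ 2 * Real.sqrt (-K / (B * a ^ 2)) ^ 2 = 0 := by
  rw [Real.sq_sqrt (div_nonneg (neg_nonneg.mpr hK.le) (by positivity))]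
  field_simp
  ring

include ha hB hK in
theorem wheelPower_nonpos {τ : ℝ} (hτ : τ ∈ Icc 0 (Real.sqrt (-K / (B * a ^ 2)))) :
    (K + B * a ^ 2 * τ ^ 2) * (a * τ) ≤ 0 := by
  have hroot := wheelPower_root ha hB hK
  have h0 := hτ.1
  have hsq := mul_le_mul_of_nonneg_left (pow_le_pow_left₀ h0 hτ.2 2)
    (by positivity : 0 ≤ B * a ^ 2)
  exact mul_nonpos_of_nonpos_of_nonneg (by linarith) (by positivity)

include ha hB hK in
theorem wheelPower_nonneg {τ : ℝ} (hτ : Real.sqrt (-K / (B * a ^ 2)) ≤ τ) :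
    0 ≤ (K + B * a ^ 2 * τ ^ 2) * (a * τ) := by
  have hroot := wheelPower_root ha hB hK
  have h0 : 0 ≤ τ := (Real.sqrt_nonneg _).trans hτ
  have hsq := mul_le_mul_of_nonneg_left (pow_le_pow_left₀ (Real.sqrt_nonneg _) hτ 2)
    (by positivity : 0 ≤ B * a ^ 2)
  exact mul_nonneg (by linarith) (by positivity)

end SignChange

theorem stmt_12_general (a B K T ηt ηm ηrb : ℝ) (ha : 0 < a) (hB : 0 < B) (hK : K < 0)
    (hT : Real.sqrt (-K / (B * a ^ 2)) < T) :
    let τb := Real.sqrt (-K / (B * a ^ 2))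
    ∫ τ in (0:ℝ)..T,
        (if 0 ≤ (K + B * a ^ 2 * τ ^ 2) * (a * τ) then
          (K + B * a ^ 2 * τ ^ 2) * (a * τ) / (ηt * ηm)
        else
          ηt * ηm * ηrb * ((K + B * a ^ 2 * τ ^ 2) * (a * τ))) =
      ηt * ηm * ηrb * ((1 / 2) * K * a * τb ^ 2 + (1 / 4) * B * a ^ 3 * τb ^ 4) +
        (1 / (ηt * ηm)) *
          ((1 / 2) * K * a * (T ^ 2 - τb ^ 2) + (1 / 4) * B * a ^ 3 * (T ^ 4 - τb ^ 4)) := by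
  intro τb
  have hτb : 0 ≤ τb := Real.sqrt_nonneg _
  have hcont : Continuous fun τ : ℝ => (K + B * a ^ 2 * τ ^ 2) * (a * τ) := by fun_prop
  refine (intervalIntegral_ite_nonneg_of_sign_change (hcont.intervalIntegrable 0 τb)
    (hcont.intervalIntegrable τb T)
    (fun τ hτ => wheelPower_nonpos ha hB hK (uIcc_of_le hτb ▸ hτ))
    (fun τ hτ => wheelPower_nonneg ha hB hK (uIcc_of_le hT.le ▸ hτ).1)).trans ?_
  rw [← integral_interval_sub_left (hcont.intervalIntegrable 0 T) (hcont.intervalIntegrable 0 τb),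
    integral_wheelPower K B a T, integral_wheelPower K B a τb]
  ring

/-- For `K < 0`, `τ̄ = √(−K/(B·a²))` and `T > τ̄`, the battery power associated with the
wheel power `h τ = (K + B·a²·τ²)·a·τ` integrates over `[0, T]` to the sum of a
regenerative part on `[0, τ̄]` and a traction part on `[τ̄, T]`. -/
theorem stmt_12 (a B K T ηt ηm ηrb : ℝ) (ha : 0 < a) (hB : 0 < B) (hK : K < 0)
    (hT : Real.sqrt (-K / (B * a ^ 2)) < T)
    (hηt : 0 < ηt) (hηm : 0 < ηm) (hηrb : 0 < ηrb) :
    let τb := Real.sqrt (-K / (B * a ^ 2))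
    ∫ τ in (0:ℝ)..T,
        (if 0 ≤ (K + B * a ^ 2 * τ ^ 2) * (a * τ) then
          (K + B * a ^ 2 * τ ^ 2) * (a * τ) / (ηt * ηm)
        else
          ηt * ηm * ηrb * ((K + B * a ^ 2 * τ ^ 2) * (a * τ))) =
      ηt * ηm * ηrb * ((1 / 2) * K * a * τb ^ 2 + (1 / 4) * B * a ^ 3 * τb ^ 4) +
        (1 / (ηt * ηm)) *
          ((1 / 2) * K * a * (T ^ 2 - τb ^ 2) + (1 / 4) * B * a ^ 3 * (T ^ 4 - τb ^ 4)) :=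
  stmt_12_general a B K T ηt ηm ηrb ha hB hK hT
end
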